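/- Let H, K₁, K₂ be Hilbert spaces and suppose the duality identity ⟨y(T), φᵀ⟩ = ⟨y⁰, φ(0)⟩ + ⟨u, Bφ⟩ + ⟨d, Rφ⟩ holds for all terminal data φᵀ ∈ K₁, where y(T), y⁰, u, d are fixed, φ = φ(φᵀ) depends linearly on φᵀ, and B, R are linear in φ. If for the choice u = B φ_ε (φ_ε solving the Euler–Lagrange equation of J_ε(φᵀ) = (1/2)|Bφ|² + ε|φᵀ| + ⟨y⁰, φ(0)⟩ + ⟨d, Rφ⟩ at a nonzero minimizer φᵀ_ε) one substitutes into the duality identity, then |y(T)|_{K₁} ≤ ε. -/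
import Mathlib


open scoped RealInnerProductSpace

/-- Abstract duality/penalization mechanism for approximate null controllability:
if the duality identity `⟨y(T), φᵀ⟩ = ⟨y⁰, Sφᵀ⟩ + ⟨u, Bφᵀ⟩ + ⟨d, Rφᵀ⟩` holds for all
terminal data, the control is chosen as `u = Bφ_ε` where `φ_ε ≠ 0` satisfies the
Euler–Lagrange equation of the penalized functional, then `‖y(T)‖ ≤ ε`. -/
theorem duality_penalization_approximate_control
    {K₁ Hu Hd H₀ : Type*}
    [NormedAddCommGroup K₁] [InnerProductSpace ℝ K₁] [CompleteSpace K₁]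
    [NormedAddCommGroup Hu] [InnerProductSpace ℝ Hu] [CompleteSpace Hu]
    [NormedAddCommGroup Hd] [InnerProductSpace ℝ Hd] [CompleteSpace Hd]
    [NormedAddCommGroup H₀] [InnerProductSpace ℝ H₀] [CompleteSpace H₀]
    (B : K₁ →L[ℝ] Hu) (R : K₁ →L[ℝ] Hd) (S : K₁ →L[ℝ] H₀)
    (yT : K₁) (y0 : H₀) (u : Hu) (d : Hd)
    (ε : ℝ) (hε : 0 < ε)
    (φε : K₁) (hφε : φε ≠ 0)
    (hu : u = B φε)
    (hduality : ∀ φT : K₁, ⟪yT, φT⟫ = ⟪y0, S φT⟫ + ⟪u, B φT⟫ + ⟪d, R φT⟫)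
    (hEL : ∀ φT : K₁,
      ⟪B φε, B φT⟫ + ε * ⟪φε, φT⟫ / ‖φε‖ + ⟪y0, S φT⟫ + ⟪d, R φT⟫ = 0) :
    ‖yT‖ ≤ ε := by
  have key : ∀ φT : K₁, ⟪yT, φT⟫ = -(ε * ⟪φε, φT⟫ / ‖φε‖) := by
    intro φT
    have h1 := hduality φT
    have h2 := hEL φT
    rw [hu] at h1
    linarith
  have bound : ∀ φT : K₁, ⟪yT, φT⟫ ≤ ε * ‖φT‖ := by
    intro φT
    have h3 := key φT
    have hcs : |⟪φε, φT⟫| ≤ ‖φε‖ * ‖φT‖ := abs_real_inner_le_norm φε φT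
    have hn : (0:ℝ) < ‖φε‖ := norm_pos_iff.mpr hφε
    rw [h3, neg_le, le_div_iff₀ hn]
    nlinarith [neg_abs_le (⟪φε, φT⟫ : ℝ)]
  have h := bound yT
  rw [real_inner_self_eq_norm_sq] at h
  rcases eq_or_lt_of_le (norm_nonneg yT) with h0 | h0
  · rw [← h0]; exact hε.le
  · nlinarith
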